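/- Let K be a field containing a primitive m-th root of unity, and let t ∈ K× be an element that is not a square in K×. If m is a power of 2 with m ≥ 2, then the image of t in K×/(K×)^m has order exactly m. -/
import Mathlib


/-- If `K` is a field containing a primitive `m`-th root of unity, `m = 2^k` with `k ≥ 1`,
and `t ∈ Kˣ` is not a square, then the image of `t` in `Kˣ/(Kˣ)^m` has order exactly `m`. -/
theorem stmt0 (K : Type*) [Field K] (m k : ℕ) (hk : 1 ≤ k) (hm : m = 2 ^ k)
    (ζ : K) (hζ : IsPrimitiveRoot ζ m) (t : Kˣ) (ht : ¬ IsSquare t) :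
    orderOf ((QuotientGroup.mk t) : Kˣ ⧸ (powMonoidHom m : Kˣ →* Kˣ).range) = m := by
  subst hm
  set N := (powMonoidHom (2 ^ k) : Kˣ →* Kˣ).range with hN
  have hdvd : orderOf ((QuotientGroup.mk t) : Kˣ ⧸ N) ∣ 2 ^ k := by
    apply orderOf_dvd_of_pow_eq_one
    rw [← QuotientGroup.mk_pow, QuotientGroup.eq_one_iff]
    exact ⟨t, rfl⟩
  obtain ⟨j, hj, hord⟩ := (Nat.dvd_prime_pow Nat.prime_two).mp hdvd
  rcases eq_or_lt_of_le hj with rfl | hjk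
  · exact hord
  exfalso
  have hmul : 2 * 2 ^ (k - 1) = 2 ^ k := by
    rw [← pow_succ']; congr 1; omega
  have hdvd2 : orderOf ((QuotientGroup.mk t) : Kˣ ⧸ N) ∣ 2 ^ (k - 1) := by
    rw [hord]; exact pow_dvd_pow 2 (by omega)
  have h1 : ((QuotientGroup.mk t) : Kˣ ⧸ N) ^ (2 ^ (k - 1)) = 1 :=
    orderOf_dvd_iff_pow_eq_one.mp hdvd2
  rw [← QuotientGroup.mk_pow, QuotientGroup.eq_one_iff] at h1
  obtain ⟨a, ha⟩ := h1
  have ha' : a ^ (2 ^ k) = t ^ (2 ^ (k - 1)) := ha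
  -- u := a^2 * t⁻¹ is a 2^(k-1)-th root of unity
  set u : Kˣ := a ^ 2 * t⁻¹ with hu
  have hu1 : u ^ (2 ^ (k - 1)) = 1 := by
    rw [hu, mul_pow, ← pow_mul, mul_comm 2 (2 ^ (k - 1)), mul_comm (2 ^ (k-1)) 2, hmul, ha',
      inv_pow, mul_inv_cancel]
  haveI : NeZero (2 ^ (k - 1)) := ⟨pow_ne_zero _ two_ne_zero⟩
  have hζ2 : IsPrimitiveRoot (ζ ^ 2) (2 ^ (k - 1)) :=
    hζ.pow (by positivity) hmul.symm
  have hcoe : ((u : K)) ^ (2 ^ (k - 1)) = 1 := by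
    rw [← Units.val_pow_eq_pow_val, hu1, Units.val_one]
  obtain ⟨i, _, hi⟩ := hζ2.eq_pow_of_pow_eq_one hcoe
  have hζunit : IsUnit ζ := hζ.isUnit (by positivity)
  set Z : Kˣ := hζunit.unit with hZ
  have hZcoe : (Z : K) = ζ := hζunit.unit_spec
  have hZu : (Z ^ i) ^ 2 = u := by
    ext
    push_cast [hZcoe]
    rw [← hi]; ring
  have ht' : t = (a * (Z ^ i)⁻¹) * (a * (Z ^ i)⁻¹) := by
    have h2 : (Z ^ i) ^ 2 = a ^ 2 * t⁻¹ := hZu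
    symm
    rw [← sq, mul_pow, inv_pow, h2, mul_inv, inv_inv, mul_inv_cancel_left]
  exact ht ⟨_, ht'⟩
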